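/- arXiv:2202.03791 — 4 statements merged into one kernel-verified Lean document; each statement's English description precedes it below -/
import Mathlib

section
/- Let P and Q be labelled iposets with T_P = S_Q (matched via the unique isomorphism of totally ordered labelled sets). Then the width of the gluing composition P * Q equals max(wid(P), wid(Q)). -/
attribute [local instance] Classical.propDecidable

/-- A labelled iposet: a finite carrier `α` with a strict (partial) precedence
order `lt`, a labelling `lab : α → Λ`, and source/target interfaces `S, T ⊆ α`
whose elements are minimal resp. maximal. -/
structure LIP (Λ α : Type) where
  lt : α → α → Prop
  lt_irrefl : ∀ x, ¬ lt x x
  lt_trans : ∀ x y z, lt x y → lt y z → lt x z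
  lab : α → Λ
  S : Set α
  T : Set α
  S_min : ∀ s ∈ S, ∀ x, ¬ lt x s
  T_max : ∀ t ∈ T, ∀ x, ¬ lt t x

/-- Width: maximal cardinality of an antichain for the precedence order. -/
noncomputable def LIP.width {Λ α : Type} [Fintype α] (P : LIP Λ α) : ℕ :=
  ((Finset.univ : Finset α).powerset.filter
    (fun s => ∀ x ∈ s, ∀ y ∈ s, ¬ P.lt x y)).sup Finset.card

/-- `R`, together with the structural inclusions `i : α → γ` and `j : β → γ`,
is the gluing composition of `P` and `Q`: the carriers are identified exactly
along `T_P = S_Q` (via a label-preserving pairing), the precedence order is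
generated by those of `P`, `Q` plus `x < y` for `x ∈ P \\ T_P`, `y ∈ Q \\ S_Q`,
the interfaces are `S_P` and `T_Q`, and labels are inherited. -/
def IsGluing {Λ α β γ : Type} (P : LIP Λ α) (Q : LIP Λ β) (R : LIP Λ γ)
    (i : α → γ) (j : β → γ) : Prop :=
  Function.Injective i ∧ Function.Injective j ∧
  (∀ c : γ, (∃ a, i a = c) ∨ (∃ b, j b = c)) ∧
  (∀ a b, i a = j b → a ∈ P.T ∧ b ∈ Q.S) ∧
  (∀ a ∈ P.T, ∃ b ∈ Q.S, i a = j b) ∧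
  (∀ b ∈ Q.S, ∃ a ∈ P.T, i a = j b) ∧
  (∀ a b, i a = j b → P.lab a = Q.lab b) ∧
  (∀ x y, R.lt x y ↔
    ((∃ a a', x = i a ∧ y = i a' ∧ P.lt a a') ∨
     (∃ b b', x = j b ∧ y = j b' ∧ Q.lt b b') ∨
     (∃ a b, x = i a ∧ y = j b ∧ a ∉ P.T ∧ b ∉ Q.S))) ∧
  R.S = i '' P.S ∧ R.T = j '' Q.T ∧
  (∀ a, R.lab (i a) = P.lab a) ∧ (∀ b, R.lab (j b) = Q.lab b)

namespace LIP

variable {Λ Λ' α β : Type}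

def IsAntichain (P : LIP Λ α) (s : Finset α) : Prop :=
  ∀ x ∈ s, ∀ y ∈ s, ¬ P.lt x y

variable {P : LIP Λ α} {R : LIP Λ' β} {f : α → β}

theorem IsAntichain.image (hf : ∀ a a', R.lt (f a) (f a') → P.lt a a') {s : Finset α}
    (hs : P.IsAntichain s) : R.IsAntichain (s.image f) := by
  simp only [IsAntichain, Finset.forall_mem_image]
  exact fun a ha a' ha' hlt => hs a ha a' ha' (hf a a' hlt)

theorem IsAntichain.preimage (hinj : Function.Injective f)
    (hf : ∀ a a', P.lt a a' → R.lt (f a) (f a')) {t : Finset β} (ht : R.IsAntichain t) :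
    P.IsAntichain (t.preimage f hinj.injOn) := by
  simp only [IsAntichain, Finset.mem_preimage]
  exact fun a ha a' ha' hlt => ht _ ha _ ha' (hf a a' hlt)

variable [Fintype α]

theorem card_le_width {s : Finset α} (hs : P.IsAntichain s) : s.card ≤ P.width :=
  Finset.le_sup (Finset.mem_filter.mpr ⟨Finset.mem_powerset.mpr s.subset_univ, hs⟩)

theorem width_le_iff {n : ℕ} : P.width ≤ n ↔ ∀ s : Finset α, P.IsAntichain s → s.card ≤ n := by
  simp only [width, Finset.sup_le_iff, Finset.mem_filter, Finset.mem_powerset,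
    Finset.subset_univ, true_and, IsAntichain]

theorem card_le_width_of_subset_range (hinj : Function.Injective f)
    (hf : ∀ a a', P.lt a a' → R.lt (f a) (f a')) {t : Finset β} (ht : R.IsAntichain t)
    (hrange : ↑t ⊆ Set.range f) : t.card ≤ P.width := by
  classical
  have hcard : (t.preimage f hinj.injOn).card = t.card := by
    rw [Finset.card_preimage, Finset.filter_true_of_mem fun b hb => hrange hb]
  exact hcard ▸ card_le_width (ht.preimage hinj hf)

theorem width_le_width_of_injective [Fintype β] (hinj : Function.Injective f)
    (hf : ∀ a a', R.lt (f a) (f a') → P.lt a a') : P.width ≤ R.width :=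
  width_le_iff.mpr fun s hs =>
    Finset.card_image_of_injective s hinj ▸ card_le_width (hs.image hf)

end LIP

namespace IsGluing

variable {Λ α β γ : Type} {P : LIP Λ α} {Q : LIP Λ β} {R : LIP Λ γ} {i : α → γ} {j : β → γ}

theorem lt_left_iff (h : IsGluing P Q R i j) (a a' : α) : R.lt (i a) (i a') ↔ P.lt a a' := by
  obtain ⟨hi, -, -, hmeet, -, -, -, hlt, -⟩ := h
  refine (hlt _ _).trans ⟨?_, fun hl => Or.inl ⟨a, a', rfl, rfl, hl⟩⟩
  rintro (⟨a₁, a₁', e, e', hl⟩ | ⟨b, b', -, e', hl⟩ | ⟨-, b, -, e', -, hb⟩)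
  · rwa [hi e, hi e']
  · exact absurd hl (Q.S_min _ (hmeet _ _ e').2 _)
  · exact (hb (hmeet _ _ e').2).elim

theorem lt_right_iff (h : IsGluing P Q R i j) (b b' : β) : R.lt (j b) (j b') ↔ Q.lt b b' := by
  obtain ⟨-, hj, -, hmeet, -, -, -, hlt, -⟩ := h
  refine (hlt _ _).trans ⟨?_, fun hl => Or.inr (Or.inl ⟨b, b', rfl, rfl, hl⟩)⟩
  rintro (⟨a, a', e, -, hl⟩ | ⟨b₁, b₁', e, e', hl⟩ | ⟨a, -, e, -, ha, -⟩)
  · exact absurd hl (P.T_max _ (hmeet _ _ e.symm).1 _)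
  · rwa [hj e, hj e']
  · exact (ha (hmeet _ _ e.symm).1).elim

/-- An element outside the image of `P` lies in `Q \ S_Q`, so it is above every element of
`P \ T_P`; an antichain containing it therefore avoids `P \ T_P`, and `T_P` is part of `Q`. -/
theorem subset_range_or_subset_range (h : IsGluing P Q R i j) {s : Finset γ}
    (hs : R.IsAntichain s) : ↑s ⊆ Set.range i ∨ ↑s ⊆ Set.range j := by
  obtain ⟨-, -, hcov, -, hTS, hST, -, hlt, -⟩ := h
  by_contra! hnot
  obtain ⟨c, hcs, hci⟩ := Set.not_subset.mp hnot.1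
  obtain ⟨c', hcs', hcj⟩ := Set.not_subset.mp hnot.2
  obtain ⟨b, rfl⟩ := (hcov c).resolve_left hci
  obtain ⟨a, rfl⟩ := (hcov c').resolve_right hcj
  have hb : b ∉ Q.S := fun hb => hci (let ⟨a, _, e⟩ := hST b hb; ⟨a, e⟩)
  have ha : a ∉ P.T := fun ha => hcj (let ⟨b, _, e⟩ := hTS a ha; ⟨b, e.symm⟩)
  exact hs _ hcs' _ hcs ((hlt _ _).mpr (Or.inr (Or.inr ⟨a, b, rfl, rfl, ha, hb⟩)))

end IsGluing

/-- The width of a gluing composition is the maximum of the widths. -/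
theorem width_glue {Λ α β γ : Type} [Fintype α] [Fintype β] [Fintype γ]
    (P : LIP Λ α) (Q : LIP Λ β) (R : LIP Λ γ) (i : α → γ) (j : β → γ)
    (h : IsGluing P Q R i j) :
    R.width = max P.width Q.width := by
  have hi : Function.Injective i := h.1
  have hj : Function.Injective j := h.2.1
  refine le_antisymm (LIP.width_le_iff.mpr fun s hs => ?_) (max_le ?_ ?_)
  · rcases h.subset_range_or_subset_range hs with hsi | hsj
    · exact le_max_of_le_left <|
        LIP.card_le_width_of_subset_range hi (fun a a' => (h.lt_left_iff a a').mpr) hs hsi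
    · exact le_max_of_le_right <|
        LIP.card_le_width_of_subset_range hj (fun b b' => (h.lt_right_iff b b').mpr) hs hsj
  · exact LIP.width_le_width_of_injective hi fun a a' => (h.lt_left_iff a a').mp
  · exact LIP.width_le_width_of_injective hj fun b b' => (h.lt_right_iff b b').mp
end

section
/- Every ipomset has at most one automorphism, namely the identity: if f : P → P is an isomorphism of labelled iposets (preserving precedence order, event order, labels, and interfaces), then f = id. -/
/-- A labelled iposet with event order: a carrier `α` with a strict precedence
order `lt` and a strict event order `elt` such that any two distinct elements
are comparable by one of them, a labelling, and interfaces `S`, `T` consisting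
of minimal resp. maximal elements. -/
structure LIPE (Λ α : Type) where
  lt : α → α → Prop
  lt_irrefl : ∀ x, ¬ lt x x
  lt_trans : ∀ x y z, lt x y → lt y z → lt x z
  elt : α → α → Prop
  elt_irrefl : ∀ x, ¬ elt x x
  elt_trans : ∀ x y z, elt x y → elt y z → elt x z
  compat : ∀ x y, x ≠ y → lt x y ∨ lt y x ∨ elt x y ∨ elt y x
  lab : α → Λ
  S : Set α
  T : Set α
  S_min : ∀ s ∈ S, ∀ x, ¬ lt x s
  T_max : ∀ t ∈ T, ∀ x, ¬ lt t x

/-!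
An automorphism `f` permutes the finite carrier, so every `x` is periodic: `f^[n] x = x` for some
`n > 0`. If `x ≠ f x`, then `x` and `f x` are related by one of the two strict orders or its
converse; since `f` preserves that relation, it holds along the orbit `x, f x, …, f^[n] x = x`,
and transitivity yields `x` related to itself.
-/

namespace Function

variable {α : Type*} {f : α → α} {r : α → α → Prop} {x : α}

theorem IsPeriodicPt.rel_self_of_rel_apply [IsTrans α r] (hf : ∀ a b, r a b → r (f a) (f b))
    {n : ℕ} (hx : IsPeriodicPt f n x) (hn : 0 < n) (h : r x (f x)) : r x x := by
  have hstep : ∀ m, r (f^[m] x) (f^[m + 1] x) := by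
    intro m
    induction m with
    | zero => simpa using h
    | succ m ih => simpa only [iterate_succ_apply'] using hf _ _ ih
  simpa [hx.eq] using Nat.rel_of_forall_rel_succ_of_lt r hstep hn

theorem not_rel_self_apply_of_mem_periodicPts [IsStrictOrder α r]
    (hf : ∀ a b, r a b → r (f a) (f b)) (hx : x ∈ periodicPts f) : ¬ r x (f x) := by
  obtain ⟨n, hn, hper⟩ := hx
  exact fun h => irrefl x (hper.rel_self_of_rel_apply hf hn h)

theorem not_rel_apply_self_of_mem_periodicPts [IsStrictOrder α r]
    (hf : ∀ a b, r a b → r (f a) (f b)) (hx : x ∈ periodicPts f) : ¬ r (f x) x :=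
  not_rel_self_apply_of_mem_periodicPts (r := swap r) (fun a b => hf b a) hx

end Function

namespace LIPE

variable {Λ α : Type} (P : LIPE Λ α)

instance isStrictOrder_lt : IsStrictOrder α P.lt where
  irrefl := P.lt_irrefl
  trans := P.lt_trans

instance isStrictOrder_elt : IsStrictOrder α P.elt where
  irrefl := P.elt_irrefl
  trans := P.elt_trans

end LIPE

theorem automorphism_eq_id_general {Λ α : Type} [Fintype α] (P : LIPE Λ α)
    (f : α → α) (hbij : Function.Bijective f)
    (hlt : ∀ x y, P.lt x y ↔ P.lt (f x) (f y))
    (helt : ∀ x y, P.elt x y ↔ P.elt (f x) (f y)) :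
    f = id := by
  funext x
  by_contra hne
  have hper : x ∈ Function.periodicPts f := hbij.injective.mem_periodicPts x
  have hlt' : ∀ a b, P.lt a b → P.lt (f a) (f b) := fun a b => (hlt a b).1
  have helt' : ∀ a b, P.elt a b → P.elt (f a) (f b) := fun a b => (helt a b).1
  rcases P.compat x (f x) (Ne.symm hne) with h | h | h | h
  exacts [Function.not_rel_self_apply_of_mem_periodicPts hlt' hper h,
    Function.not_rel_apply_self_of_mem_periodicPts hlt' hper h,
    Function.not_rel_self_apply_of_mem_periodicPts helt' hper h,
    Function.not_rel_apply_self_of_mem_periodicPts helt' hper h]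

/-- Every labelled iposet has at most one automorphism: any bijection of a
finite labelled iposet preserving (and reflecting) precedence order, event
order, labels, and interfaces is the identity. -/
theorem automorphism_eq_id {Λ α : Type} [Fintype α] (P : LIPE Λ α)
    (f : α → α) (hbij : Function.Bijective f)
    (hlt : ∀ x y, P.lt x y ↔ P.lt (f x) (f y))
    (helt : ∀ x y, P.elt x y ↔ P.elt (f x) (f y))
    (hlab : ∀ x, P.lab (f x) = P.lab x)
    (hS : f '' P.S = P.S) (hT : f '' P.T = P.T) :
    f = id :=
  automorphism_eq_id_general P f hbij hlt helt
end

section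
/- Subsumption of labelled iposets is a preorder: it is reflexive and transitive. Moreover, if P ⊑ Q and Q ⊑ P (mutual subsumption), then P ≅ Q. -/
/-- A subsumption `f : P → Q`: a bijection preserving interfaces and labels,
reflecting precedence, and preserving the essential event order. -/
def IsSubsumption {L a b : Type} (P : LIPE L a) (Q : LIPE L b) (f : a → b) : Prop :=
  Function.Bijective f ∧ f '' P.S = Q.S ∧ f '' P.T = Q.T ∧
  (∀ x, Q.lab (f x) = P.lab x) ∧
  (∀ x y, Q.lt (f x) (f y) → P.lt x y) ∧
  (∀ x y, P.elt x y → ¬ P.lt x y → ¬ P.lt y x → Q.elt (f x) (f y))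

/-- `P ⊑ Q`: there exists a subsumption `P → Q`. -/
def Subsumed {L a b : Type} (P : LIPE L a) (Q : LIPE L b) : Prop :=
  ∃ f : a → b, IsSubsumption P Q f

/- The composite `g ∘ f` of subsumptions `f : P → Q` and `g : Q → P` is a subsumption `P → P`
and a permutation of a finite set, so `(g ∘ f)^[n] = id` for some `n > 0`. Then
`(g ∘ f)^[n - 1] ∘ g`, again a subsumption, is the inverse of `f`. -/

theorem Function.Bijective.exists_pos_iterate_eq_id {α : Type*} [Finite α] {h : α → α}
    (hh : Function.Bijective h) : ∃ n, 0 < n ∧ h^[n] = id := by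
  let e := Equiv.ofBijective h hh
  refine ⟨orderOf e, orderOf_pos e, ?_⟩
  rw [show h^[orderOf e] = ⇑(e ^ orderOf e) from (Equiv.Perm.coe_pow e _).symm,
    pow_orderOf_eq_one, Equiv.Perm.coe_one]

namespace IsSubsumption

variable {L a b c : Type} {P : LIPE L a} {Q : LIPE L b} {R : LIPE L c}

theorem id (P : LIPE L a) : IsSubsumption P P id :=
  ⟨Function.bijective_id, Set.image_id _, Set.image_id _, fun _ => rfl, fun _ _ h => h,
    fun _ _ h _ _ => h⟩

theorem comp {f : a → b} {g : b → c} (hf : IsSubsumption P Q f) (hg : IsSubsumption Q R g) :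
    IsSubsumption P R (g ∘ f) := by
  obtain ⟨bij_f, S_f, T_f, lab_f, lt_f, elt_f⟩ := hf
  obtain ⟨bij_g, S_g, T_g, lab_g, lt_g, elt_g⟩ := hg
  refine ⟨bij_g.comp bij_f, by rw [Set.image_comp, S_f, S_g], by rw [Set.image_comp, T_f, T_g],
    fun x => (lab_g (f x)).trans (lab_f x), fun x y h => lt_f x y (lt_g _ _ h), ?_⟩
  intro x y hxy hnlt hnlt'
  exact elt_g _ _ (elt_f x y hxy hnlt hnlt') (fun h => hnlt (lt_f _ _ h))
    (fun h => hnlt' (lt_f _ _ h))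

theorem iterate {h : a → a} (hh : IsSubsumption P P h) : ∀ k, IsSubsumption P P h^[k]
  | 0 => IsSubsumption.id P
  | k + 1 => Function.iterate_succ h k ▸ hh.comp (hh.iterate k)

theorem exists_inverse [Finite a] {f : a → b} {g : b → a} (hf : IsSubsumption P Q f)
    (hg : IsSubsumption Q P g) :
    ∃ f' : b → a, IsSubsumption Q P f' ∧ Function.LeftInverse f' f ∧
      Function.RightInverse f' f := by
  obtain ⟨n, hn, hid⟩ := (hf.comp hg).1.exists_pos_iterate_eq_id
  have hleft : Function.LeftInverse ((g ∘ f)^[n - 1] ∘ g) f := fun x => by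
    change (g ∘ f)^[n - 1] ((g ∘ f) x) = x
    rw [← Function.iterate_succ_apply, Nat.succ_eq_add_one, Nat.sub_one_add_one hn.ne', hid]
    rfl
  exact ⟨_, hg.comp ((hf.comp hg).iterate _), hleft, hleft.rightInverse_of_surjective hf.1.2⟩

end IsSubsumption

theorem subsumption_preorder_general {L a b c : Type} [Fintype a] :
    (∀ P : LIPE L a, Subsumed P P) ∧
    (∀ (P : LIPE L a) (Q : LIPE L b) (R : LIPE L c),
      Subsumed P Q → Subsumed Q R → Subsumed P R) ∧
    (∀ (P : LIPE L a) (Q : LIPE L b), Subsumed P Q → Subsumed Q P →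
      ∃ (f : a → b) (g : b → a), IsSubsumption P Q f ∧ IsSubsumption Q P g ∧
        Function.LeftInverse g f ∧ Function.RightInverse g f) :=
  ⟨fun P => ⟨id, IsSubsumption.id P⟩,
    fun _ _ _ ⟨f, hf⟩ ⟨g, hg⟩ => ⟨g ∘ f, hf.comp hg⟩,
    fun _ _ ⟨f, hf⟩ ⟨_, hg⟩ => let ⟨f', hf', hleft, hright⟩ := hf.exists_inverse hg
      ⟨f, f', hf, hf', hleft, hright⟩⟩

/-- Subsumption of labelled iposets is reflexive and transitive, and mutual
subsumption implies isomorphism (a subsumption which is invertible by a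
subsumption). -/
theorem subsumption_preorder {L a b c : Type} [Fintype a] [Fintype b] [Fintype c] :
    (∀ P : LIPE L a, Subsumed P P) ∧
    (∀ (P : LIPE L a) (Q : LIPE L b) (R : LIPE L c),
      Subsumed P Q → Subsumed Q R → Subsumed P R) ∧
    (∀ (P : LIPE L a) (Q : LIPE L b), Subsumed P Q → Subsumed Q P →
      ∃ (f : a → b) (g : b → a), IsSubsumption P Q f ∧ IsSubsumption Q P g ∧
        Function.LeftInverse g f ∧ Function.RightInverse g f) :=
  subsumption_preorder_general
end

section
/- Interval orders compose under gluing: if labelled iposets P and Q each admit an interval representation and T_P ≅ S_Q, then P * Q admits an interval representation. -/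
attribute [local instance] Classical.propDecidable

/-- `P` admits an interval representation. -/
def HasIntervalRep {Λ α : Type} (P : LIP Λ α) : Prop :=
  ∃ b e : α → ℝ, (∀ x, b x ≤ e x) ∧ (∀ x y, P.lt x y ↔ e x < b y)

/-! Rescale the representation of `P` into the negative reals and that of `Q` into the positive
reals. An element of `P \ T_P` keeps its `P`-interval, an element of `Q \ S_Q` its `Q`-interval, and
an interface element begins where it begins in `P` and ends where it ends in `Q`. The relations
`x < y` for `x ∈ P \ T_P`, `y ∈ Q \ S_Q` then hold because all of `P` lies to the left of all
of `Q`. -/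

open Function

section

variable {Λ α β γ : Type}

def IsIntervalRep (P : LIP Λ α) (b e : α → ℝ) : Prop :=
  (∀ x, b x ≤ e x) ∧ ∀ x y, P.lt x y ↔ e x < b y

theorem IsIntervalRep.comp_strictMono {P : LIP Λ α} {b e : α → ℝ} {f : ℝ → ℝ}
    (hr : IsIntervalRep P b e) (hf : StrictMono f) : IsIntervalRep P (f ∘ b) (f ∘ e) :=
  ⟨fun x => hf.monotone (hr.1 x), fun x y => (hr.2 x y).trans hf.lt_iff_lt.symm⟩

theorem LIP.isIntervalRep_of_lt_iff (P : LIP Λ α) {b e : α → ℝ}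
    (h : ∀ x y, P.lt x y ↔ e x < b y) : IsIntervalRep P b e :=
  ⟨fun x => not_lt.mp ((h x x).not.mp (P.lt_irrefl x)), h⟩

namespace IsGluing

variable {P : LIP Λ α} {Q : LIP Λ β} {R : LIP Λ γ} {i : α → γ} {j : β → γ}

theorem exists_left_notMem_or_exists_right (h : IsGluing P Q R i j) (c : γ) :
    (∃ p ∉ P.T, i p = c) ∨ ∃ q, j q = c := by
  rcases h.2.2.1 c with ⟨p, rfl⟩ | hq
  · by_cases hp : p ∈ P.T
    · obtain ⟨q, -, hpq⟩ := h.2.2.2.2.1 p hp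
      exact Or.inr ⟨q, hpq.symm⟩
    · exact Or.inl ⟨p, hp, rfl⟩
  · exact Or.inr hq

theorem exists_left_or_exists_right_notMem (h : IsGluing P Q R i j) (c : γ) :
    (∃ p, i p = c) ∨ ∃ q ∉ Q.S, j q = c := by
  rcases h.2.2.1 c with hp | ⟨q, rfl⟩
  · exact Or.inl hp
  · by_cases hq : q ∈ Q.S
    · obtain ⟨p, -, hpq⟩ := h.2.2.2.2.2.1 q hq
      exact Or.inl ⟨p, hpq⟩
    · exact Or.inr ⟨q, hq, rfl⟩

/-- The default values `0` are never used, since `i` and `j` jointly cover `γ`. -/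
theorem isIntervalRep_extend (h : IsGluing P Q R i j) {bP eP : α → ℝ} {bQ eQ : β → ℝ}
    (hP : IsIntervalRep P bP eP) (hQ : IsIntervalRep Q bQ eQ) (hsep : ∀ p q, eP p < bQ q) :
    IsIntervalRep R (extend i bP (extend j bQ 0)) (extend j eQ (extend i eP 0)) := by
  obtain ⟨hi, hj, -, hinter, -, -, -, hlt, -⟩ := id h
  set bR := extend i bP (extend j bQ 0)
  set eR := extend j eQ (extend i eP 0)
  have hbR_left (p : α) : bR (i p) = bP p := hi.extend_apply _ _ p
  have heR_right (q : β) : eR (j q) = eQ q := hj.extend_apply _ _ q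
  have heR_left (p : α) (hp : p ∉ P.T) : eR (i p) = eP p :=
    (extend_apply' _ _ _ fun ⟨q, hq⟩ => hp (hinter p q hq.symm).1).trans (hi.extend_apply _ _ p)
  have hbR_right (q : β) (hq : q ∉ Q.S) : bR (j q) = bQ q :=
    (extend_apply' _ _ _ fun ⟨p, hp⟩ => hq (hinter p q hp).2).trans (hj.extend_apply _ _ q)
  refine R.isIntervalRep_of_lt_iff fun x y => (hlt x y).trans ⟨?_, fun hxy => ?_⟩
  · rintro (⟨p, p', rfl, rfl, hpp'⟩ | ⟨q, q', rfl, rfl, hqq'⟩ | ⟨p, q, rfl, rfl, hp, hq⟩)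
    · rw [heR_left p fun hT => P.T_max p hT p' hpp', hbR_left]
      exact (hP.2 p p').1 hpp'
    · rw [heR_right, hbR_right q' fun hS => Q.S_min q' hS q hqq']
      exact (hQ.2 q q').1 hqq'
    · rw [heR_left p hp, hbR_right q hq]
      exact hsep p q
  · rcases h.exists_left_notMem_or_exists_right x with ⟨p, hp, rfl⟩ | ⟨q, rfl⟩ <;>
      rcases h.exists_left_or_exists_right_notMem y with ⟨p', rfl⟩ | ⟨q', hq', rfl⟩
    · rw [heR_left p hp, hbR_left] at hxy
      exact Or.inl ⟨p, p', rfl, rfl, (hP.2 p p').2 hxy⟩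
    · exact Or.inr (Or.inr ⟨p, q', rfl, rfl, hp, hq'⟩)
    · rw [heR_right, hbR_left] at hxy
      exact absurd ((hP.1 p').trans ((hsep p' q).le.trans (hQ.1 q))) hxy.not_ge
    · rw [heR_right, hbR_right q' hq'] at hxy
      exact Or.inr (Or.inl ⟨q, q', rfl, rfl, (hQ.2 q q').2 hxy⟩)

end IsGluing

end

theorem glue_interval_general {Λ α β γ : Type}
    (P : LIP Λ α) (Q : LIP Λ β) (R : LIP Λ γ) (i : α → γ) (j : β → γ)
    (hP : HasIntervalRep P) (hQ : HasIntervalRep Q)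
    (h : IsGluing P Q R i j) : HasIntervalRep R := by
  obtain ⟨bP, eP, hrepP : IsIntervalRep P bP eP⟩ := hP
  obtain ⟨bQ, eQ, hrepQ : IsIntervalRep Q bQ eQ⟩ := hQ
  have hneg : StrictMono fun x : ℝ => -Real.exp (-x) := fun x y hxy => by simpa using hxy
  exact ⟨_, _, h.isIntervalRep_extend (hrepP.comp_strictMono hneg)
    (hrepQ.comp_strictMono Real.exp_strictMono)
    fun p q => (neg_neg_of_pos (Real.exp_pos _)).trans (Real.exp_pos _)⟩

/-- Interval orders compose under gluing: if `P` and `Q` admit interval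
representations and `R` is a gluing composition `P * Q`, then `R` admits an
interval representation. -/
theorem glue_interval {Λ α β γ : Type} [Fintype α] [Fintype β] [Fintype γ]
    (P : LIP Λ α) (Q : LIP Λ β) (R : LIP Λ γ) (i : α → γ) (j : β → γ)
    (hP : HasIntervalRep P) (hQ : HasIntervalRep Q)
    (h : IsGluing P Q R i j) : HasIntervalRep R :=
  glue_interval_general P Q R i j hP hQ h
end
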